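/- Let θ ∈ (π/4, π/2), let v₁, v₂ be unit vectors with (v₁, v₂) a right-handed system spanning angle 2θ, set v₃ = −(v₁+v₂)/|v₁+v₂| and v₃^⊥ its π/2 rotation. Let F ∈ ℝ^{2×2} satisfy det F = 1, |Fv₁| > 1, |Fv₂| > 1 and Fv₁·Fv₂ < 0, and set F_t = F(I + t v₃^⊥ ⊗ v₃). Then the equation |F_t v₁| = 1 has two distinct real solutions in t, and both solutions have the same sign. -/

import Mathlib

/-!
Write `u = F v₁`, `w = F v₃^⊥` and `a = v₃ ⬝ v₁ = -|v₁ + v₂| / 2 ≠ 0`. Then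
`|F_t v₁|² = a²|w|² t² + 2a (w ⬝ u) t + |u|²`, and since `det F = 1` the Lagrange identity
`(w ⬝ u)² + a² = |w|²|u|²` turns the discriminant of `|F_t v₁|² = 1` into `4a²(|w|² - a²)`.
As `v₁ - v₂` is parallel to `v₃^⊥`, `|w|² = |F(v₁ - v₂)|² / |v₁ - v₂|² > 2 / (4 - 4a²) ≥ a²`,
so there are two distinct roots, and their product `(|u|² - 1) / (a²|w|²)` is positive.
-/

noncomputable section

def dot2 (a b : Fin 2 → ℝ) : ℝ := a 0 * b 0 + a 1 * b 1

def norm2 (a : Fin 2 → ℝ) : ℝ := Real.sqrt (dot2 a a)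

def perp (a : Fin 2 → ℝ) : Fin 2 → ℝ := ![-(a 1), a 0]

open Matrix

lemma dot2_eq_dotProduct (a b : Fin 2 → ℝ) : dot2 a b = a ⬝ᵥ b := by
  simp [dot2, dotProduct, Fin.sum_univ_two]

lemma norm2_eq_one_iff (a : Fin 2 → ℝ) : norm2 a = 1 ↔ a ⬝ᵥ a = 1 := by
  rw [norm2, Real.sqrt_eq_one, dot2_eq_dotProduct]

lemma one_lt_norm2_iff (a : Fin 2 → ℝ) : 1 < norm2 a ↔ 1 < a ⬝ᵥ a := by
  rw [norm2, Real.lt_sqrt zero_le_one, one_pow, dot2_eq_dotProduct]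

lemma perp_dotProduct_perp (a b : Fin 2 → ℝ) : perp a ⬝ᵥ perp b = a ⬝ᵥ b := by
  simp only [dotProduct, perp, Fin.isValue, Fin.sum_univ_two, cons_val_zero, cons_val_one,
    cons_val_fin_one]
  ring

lemma eq_smul_perp_of_dotProduct_eq_zero {e x : Fin 2 → ℝ} (he : e ⬝ᵥ e = 1)
    (hx : x ⬝ᵥ e = 0) : x = (x ⬝ᵥ perp e) • perp e := by
  simp only [dotProduct, Fin.sum_univ_two] at he hx
  ext i
  fin_cases i <;>
    simp only [Fin.zero_eta, Fin.mk_one, Fin.isValue, dotProduct, perp, Fin.sum_univ_two,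
      cons_val_zero, cons_val_one, cons_val_fin_one, Pi.smul_apply, smul_eq_mul]
  · linear_combination (-x 0) * he + e 0 * hx
  · linear_combination (-x 1) * he + e 1 * hx

lemma mulVec_perp_dotProduct_sq_add (F : Matrix (Fin 2) (Fin 2) ℝ) (x y : Fin 2 → ℝ) :
    (F *ᵥ perp x ⬝ᵥ F *ᵥ y) ^ 2 + F.det ^ 2 * (x ⬝ᵥ y) ^ 2
      = (F *ᵥ perp x ⬝ᵥ F *ᵥ perp x) * (F *ᵥ y ⬝ᵥ F *ᵥ y) := by
  simp only [dotProduct, mulVec, perp, Fin.isValue, Fin.sum_univ_two, cons_val_zero,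
    cons_val_one, cons_val_fin_one, det_fin_two]
  ring

section Shear

variable {ι R : Type*} [Fintype ι] [DecidableEq ι] [CommRing R]

lemma mul_one_add_smul_vecMulVec_mulVec (F : Matrix ι ι R) (t : R) (p q v : ι → R) :
    (F * (1 + t • vecMulVec p q)) *ᵥ v = F *ᵥ v + (t * (q ⬝ᵥ v)) • F *ᵥ p := by
  rw [← mulVec_mulVec, add_mulVec, one_mulVec, smul_mulVec, vecMulVec_mulVec, op_smul_eq_smul,
    mulVec_add, mulVec_smul, mulVec_smul, smul_smul]

lemma dotProduct_self_mul_one_add_smul_vecMulVec_mulVec (F : Matrix ι ι R) (t : R)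
    (p q v : ι → R) :
    (F * (1 + t • vecMulVec p q)) *ᵥ v ⬝ᵥ (F * (1 + t • vecMulVec p q)) *ᵥ v
      = (q ⬝ᵥ v) ^ 2 * (F *ᵥ p ⬝ᵥ F *ᵥ p) * (t * t) + 2 * (q ⬝ᵥ v) * (F *ᵥ p ⬝ᵥ F *ᵥ v) * t
        + F *ᵥ v ⬝ᵥ F *ᵥ v := by
  simp only [mul_one_add_smul_vecMulVec_mulVec, dotProduct_add, add_dotProduct,
    dotProduct_smul, smul_dotProduct, smul_eq_mul, dotProduct_comm (F *ᵥ v) (F *ᵥ p)]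
  ring

end Shear

lemma exists_two_roots_of_discrim_pos {A B C : ℝ} (hA : 0 < A) (hC : 0 < C)
    (hD : 0 < discrim A B C) :
    ∃ t₁ t₂ : ℝ, t₁ ≠ t₂ ∧ 0 < t₁ * t₂ ∧
      ∀ t, A * (t * t) + B * t + C = 0 ↔ t = t₁ ∨ t = t₂ := by
  set s := Real.sqrt (discrim A B C)
  have hs : 0 < s := Real.sqrt_pos.mpr hD
  have hss : discrim A B C = s * s := (Real.mul_self_sqrt hD.le).symm
  refine ⟨(-B + s) / (2 * A), (-B - s) / (2 * A), ?_, ?_, quadratic_eq_zero_iff hA.ne' hss⟩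
  · rw [Ne, div_left_inj' (by positivity)]
    linarith
  · have hprod : (-B + s) / (2 * A) * ((-B - s) / (2 * A)) = C / A := by
      rw [discrim] at hss
      field_simp
      linear_combination hss
    rw [hprod]
    positivity

theorem exists_two_solutions_dotProduct_self_shear_eq_one (F : Matrix (Fin 2) (Fin 2) ℝ)
    (hdet : F.det = 1) {e v : Fin 2 → ℝ} (hev : e ⬝ᵥ v ≠ 0)
    (hlt : (e ⬝ᵥ v) ^ 2 < F *ᵥ perp e ⬝ᵥ F *ᵥ perp e) (hv : 1 < F *ᵥ v ⬝ᵥ F *ᵥ v) :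
    ∃ t₁ t₂ : ℝ, t₁ ≠ t₂ ∧ 0 < t₁ * t₂ ∧ ∀ t,
      (F * (1 + t • vecMulVec (perp e) e)) *ᵥ v ⬝ᵥ (F * (1 + t • vecMulVec (perp e) e)) *ᵥ v = 1
        ↔ t = t₁ ∨ t = t₂ := by
  have ha : 0 < (e ⬝ᵥ v) ^ 2 := sq_pos_of_ne_zero hev
  have hlagrange := mulVec_perp_dotProduct_sq_add F e v
  rw [hdet] at hlagrange
  obtain ⟨t₁, t₂, hne, hpos, hroots⟩ := exists_two_roots_of_discrim_pos
    (A := (e ⬝ᵥ v) ^ 2 * (F *ᵥ perp e ⬝ᵥ F *ᵥ perp e))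
    (B := 2 * (e ⬝ᵥ v) * (F *ᵥ perp e ⬝ᵥ F *ᵥ v)) (C := F *ᵥ v ⬝ᵥ F *ᵥ v - 1)
    (by nlinarith) (sub_pos.mpr hv) (by rw [discrim]; nlinarith)
  refine ⟨t₁, t₂, hne, hpos, fun t => ?_⟩
  rw [dotProduct_self_mul_one_add_smul_vecMulVec_mulVec, ← hroots]
  constructor <;> intro h <;> linarith

section Bisector

variable {v₁ v₂ : Fin 2 → ℝ} {n : ℝ}

lemma neg_bisector_dotProduct_left (h₁ : v₁ ⬝ᵥ v₁ = 1) (h₂ : v₂ ⬝ᵥ v₂ = 1) (hn : 0 < n)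
    (hn2 : n ^ 2 = (v₁ + v₂) ⬝ᵥ (v₁ + v₂)) : (-n⁻¹ • (v₁ + v₂)) ⬝ᵥ v₁ = -(n / 2) := by
  simp only [add_dotProduct, dotProduct_add, h₁, h₂, dotProduct_comm v₂ v₁] at hn2
  rw [smul_dotProduct, add_dotProduct, h₁, dotProduct_comm, smul_eq_mul]
  field_simp
  linear_combination hn2

lemma sq_half_lt_dotProduct_self_mulVec_perp_neg_bisector (h₁ : v₁ ⬝ᵥ v₁ = 1)
    (h₂ : v₂ ⬝ᵥ v₂ = 1) (hn : 0 < n) (hn2 : n ^ 2 = (v₁ + v₂) ⬝ᵥ (v₁ + v₂))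
    (F : Matrix (Fin 2) (Fin 2) ℝ) (hF : 2 < F *ᵥ (v₁ - v₂) ⬝ᵥ F *ᵥ (v₁ - v₂)) :
    (n / 2) ^ 2 < F *ᵥ perp (-n⁻¹ • (v₁ + v₂)) ⬝ᵥ F *ᵥ perp (-n⁻¹ • (v₁ + v₂)) := by
  set e := -n⁻¹ • (v₁ + v₂)
  set k := (v₁ - v₂) ⬝ᵥ perp e
  simp only [add_dotProduct, dotProduct_add, h₁, h₂, dotProduct_comm v₂ v₁] at hn2
  have he : e ⬝ᵥ e = 1 := by
    simp only [e, smul_dotProduct, dotProduct_smul, add_dotProduct, dotProduct_add, h₁, h₂,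
      dotProduct_comm v₂ v₁, smul_eq_mul]
    field_simp
    linear_combination -hn2
  have horth : (v₁ - v₂) ⬝ᵥ e = 0 := by
    rw [dotProduct_smul, sub_dotProduct, dotProduct_add, dotProduct_add, h₁, h₂,
      dotProduct_comm v₂ v₁, smul_eq_mul]
    ring
  have hx : v₁ - v₂ = k • perp e := eq_smul_perp_of_dotProduct_eq_zero he horth
  have hk : k ^ 2 = 4 - n ^ 2 :=
    calc k ^ 2 = (k • perp e) ⬝ᵥ (k • perp e) := by
          rw [smul_dotProduct, dotProduct_smul, perp_dotProduct_perp, he, smul_eq_mul,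
            smul_eq_mul]
          ring
      _ = 4 - n ^ 2 := by
          rw [← hx, sub_dotProduct, dotProduct_sub, dotProduct_sub, h₁, h₂,
            dotProduct_comm v₂ v₁]
          linarith
  rw [hx, mulVec_smul, smul_dotProduct, dotProduct_smul, smul_eq_mul, smul_eq_mul] at hF
  -- `k² |F perp e|² > 2 ≥ k² n² / 4`, since `k² n² = (4 - n²) n² ≤ 4`
  nlinarith [sq_nonneg (n ^ 2 - 2), sq_nonneg k]

end Bisector

theorem stmt11_general (θ : ℝ) (hθ : θ ∈ Set.Ioo (Real.pi/4) (Real.pi/2))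
    (v₁ v₂ : Fin 2 → ℝ) (hv₁ : norm2 v₁ = 1) (hv₂ : norm2 v₂ = 1)
    (hangle : dot2 v₁ v₂ = Real.cos (2*θ))
    (v₃ : Fin 2 → ℝ) (hv₃ : v₃ = fun i => -(v₁ i + v₂ i) / norm2 (fun j => v₁ j + v₂ j))
    (F : Matrix (Fin 2) (Fin 2) ℝ) (hdet : F.det = 1)
    (h1 : 1 < norm2 (F.mulVec v₁)) (h2 : 1 < norm2 (F.mulVec v₂))
    (hdotFF : dot2 (F.mulVec v₁) (F.mulVec v₂) < 0)
    (Ft : ℝ → Matrix (Fin 2) (Fin 2) ℝ)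
    (hFt : Ft = fun t => F * (1 + t • Matrix.vecMulVec (perp v₃) v₃)) :
    ∃ t₁ t₂ : ℝ, t₁ ≠ t₂ ∧ 0 < t₁ * t₂ ∧
      norm2 ((Ft t₁).mulVec v₁) = 1 ∧ norm2 ((Ft t₂).mulVec v₁) = 1 ∧
      ∀ t : ℝ, norm2 ((Ft t).mulVec v₁) = 1 → t = t₁ ∨ t = t₂ := by
  rw [norm2_eq_one_iff] at hv₁ hv₂
  rw [one_lt_norm2_iff] at h1 h2
  rw [dot2_eq_dotProduct] at hangle hdotFF
  set n := norm2 (fun j => v₁ j + v₂ j)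
  have hsum : 0 < (v₁ + v₂) ⬝ᵥ (v₁ + v₂) := by
    have hcos : 0 < Real.cos θ :=
      Real.cos_pos_of_mem_Ioo ⟨by linarith [hθ.1, Real.pi_pos], hθ.2⟩
    rw [add_dotProduct, dotProduct_add, dotProduct_add, hv₁, hv₂, dotProduct_comm v₂ v₁, hangle,
      Real.cos_two_mul]
    nlinarith
  have hdot2 : dot2 (fun j => v₁ j + v₂ j) (fun j => v₁ j + v₂ j) = (v₁ + v₂) ⬝ᵥ (v₁ + v₂) :=
    dot2_eq_dotProduct _ _
  have hn2 : n ^ 2 = (v₁ + v₂) ⬝ᵥ (v₁ + v₂) :=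
    (Real.sq_sqrt (by rw [hdot2]; exact hsum.le)).trans hdot2
  have hn : 0 < n := Real.sqrt_pos.mpr (by rw [hdot2]; exact hsum)
  have hv₃' : v₃ = -n⁻¹ • (v₁ + v₂) := by
    rw [hv₃]
    ext i
    simp only [Pi.smul_apply, Pi.add_apply, smul_eq_mul]
    ring
  have hF : 2 < F *ᵥ (v₁ - v₂) ⬝ᵥ F *ᵥ (v₁ - v₂) := by
    rw [mulVec_sub, sub_dotProduct, dotProduct_sub, dotProduct_sub, dotProduct_comm (F *ᵥ v₂)]
    linarith
  have ha := neg_bisector_dotProduct_left hv₁ hv₂ hn hn2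
  obtain ⟨t₁, t₂, hne, hpos, hsols⟩ := exists_two_solutions_dotProduct_self_shear_eq_one F hdet
    (e := v₃) (v := v₁) (by rw [hv₃', ha]; linarith)
    (by rw [hv₃', ha, neg_sq]
        exact sq_half_lt_dotProduct_self_mulVec_perp_neg_bisector hv₁ hv₂ hn hn2 F hF)
    (by linarith)
  simp only [hFt, norm2_eq_one_iff, hsols]
  exact ⟨t₁, t₂, hne, hpos, Or.inl rfl, Or.inr rfl, fun _ => id⟩

theorem stmt11 (θ : ℝ) (hθ : θ ∈ Set.Ioo (Real.pi/4) (Real.pi/2))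
    (v₁ v₂ : Fin 2 → ℝ) (hv₁ : norm2 v₁ = 1) (hv₂ : norm2 v₂ = 1)
    (hangle : dot2 v₁ v₂ = Real.cos (2*θ))
    (hright : dot2 (perp v₁) v₂ = Real.sin (2*θ))
    (v₃ : Fin 2 → ℝ) (hv₃ : v₃ = fun i => -(v₁ i + v₂ i) / norm2 (fun j => v₁ j + v₂ j))
    (F : Matrix (Fin 2) (Fin 2) ℝ) (hdet : F.det = 1)
    (h1 : 1 < norm2 (F.mulVec v₁)) (h2 : 1 < norm2 (F.mulVec v₂))
    (hdotFF : dot2 (F.mulVec v₁) (F.mulVec v₂) < 0)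
    (Ft : ℝ → Matrix (Fin 2) (Fin 2) ℝ)
    (hFt : Ft = fun t => F * (1 + t • Matrix.vecMulVec (perp v₃) v₃)) :
    ∃ t₁ t₂ : ℝ, t₁ ≠ t₂ ∧ 0 < t₁ * t₂ ∧
      norm2 ((Ft t₁).mulVec v₁) = 1 ∧ norm2 ((Ft t₂).mulVec v₁) = 1 ∧
      ∀ t : ℝ, norm2 ((Ft t).mulVec v₁) = 1 → t = t₁ ∨ t = t₂ :=
  stmt11_general θ hθ v₁ v₂ hv₁ hv₂ hangle v₃ hv₃ F hdet h1 h2 hdotFF Ft hFt
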